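/- Let ρ : {−1,1}ⁿ → 𝒮(ℋ) be a density-matrix-valued function on a Hilbert space ℋ of dimension 2^c. Then for any ℓ ∈ ℕ, Σ_{|S|=ℓ} (Tr|ρ̂(S)|)² ≤ 2^{O(ℓ)}·((c/ℓ)^ℓ + 1), where ρ̂(S) = E_x[ρ(x)χ_S(x)] and |A| = √(A A†). -/

import Mathlib

/-!
Pick for every `S` a symmetric orthogonal matrix `U_S` (the sign of the symmetric matrix `ρ̂(S)`)
with `Tr (U_S ρ̂(S)) = Tr |ρ̂(S)| =: a_S`, and let `M(x) = ∑_{|S| = ℓ} a_S χ_S(x) U_S`, so that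
`Q := ∑ a_S² = 𝔼ₓ Tr (M(x) ρ(x))`. For `p = 2^k`, Jensen's inequality and repeated Cauchy–Schwarz
(nonnegativity of the variance `Tr ((M - t)² ρ)`) give `Q^{2p} ≤ 𝔼ₓ Tr M(x)^{2p}`. Expanding the
power, the mean of a product of characters is nonnegative and the trace of a product of orthogonal
matrices is at most the dimension `2^c`, so `𝔼ₓ Tr M(x)^{2p} ≤ 2^c 𝔼ₓ g(x)^{2p}` for the scalar
function `g = ∑ a_S χ_S`. Hypercontractivity on the cube (Bonami's lemma, by induction on the
coordinates with Hölder's inequality) bounds `𝔼 g^{2p} ≤ ((2p)^ℓ Q)^p`. Hence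
`Q^p ≤ 2^c (2p)^{ℓp}`, and taking `p ≈ c/ℓ` gives the bound with `C = 3`.
-/

section
open scoped ComplexOrder

/-- The positive semidefinite square root of a positive semidefinite matrix
(the definition removed from Mathlib, restored with its old meaning). -/
noncomputable def Matrix.PosSemidef.sqrt {n 𝕜 : Type*} [RCLike 𝕜] [Fintype n] [DecidableEq n]
    {A : Matrix n n 𝕜} (hA : A.PosSemidef) : Matrix n n 𝕜 :=
  hA.1.eigenvectorUnitary.1 * Matrix.diagonal ((↑) ∘ (√·) ∘ hA.1.eigenvalues) *
    (star hA.1.eigenvectorUnitary : Matrix n n 𝕜)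

end

open Finset Matrix
open scoped BigOperators

section Scalar

theorem sum_range_two_mul_add_one_of_odd_eq_zero {M : Type*} [AddCommMonoid M] (f : ℕ → M)
    (hf : ∀ k, Odd k → f k = 0) (p : ℕ) :
    ∑ k ∈ range (2 * p + 1), f k = ∑ j ∈ range (p + 1), f (2 * j) := by
  induction p with
  | zero => simp
  | succ p ih =>
    rw [show 2 * (p + 1) + 1 = 2 * p + 1 + 1 + 1 by ring, sum_range_succ, sum_range_succ, ih,
      hf _ (odd_two_mul_add_one p), add_zero, sum_range_succ _ (p + 1)]
    ring_nf

theorem add_pow_two_mul_add_sub_pow_two_mul {R : Type*} [CommRing R] (y z : R) (p : ℕ) :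
    (y + z) ^ (2 * p) + (y - z) ^ (2 * p)
      = 2 * ∑ j ∈ range (p + 1),
          ((2 * p).choose (2 * j) : R) * z ^ (2 * j) * y ^ (2 * (p - j)) := by
  rw [sub_eq_add_neg, add_comm y, add_comm y, add_pow, add_pow, ← sum_add_distrib, mul_sum,
    sum_range_two_mul_add_one_of_odd_eq_zero]
  · refine sum_congr rfl fun j _ => ?_
    rw [(even_two_mul j).neg_pow, show 2 * p - 2 * j = 2 * (p - j) by omega]
    ring
  · intro k hk
    rw [hk.neg_pow]
    ring

theorem Nat.choose_two_mul_two_mul_le (p j : ℕ) :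
    (2 * p).choose (2 * j) ≤ (2 * p) ^ j * p.choose j := by
  induction j with
  | zero => simp
  | succ j ih =>
    rcases le_or_gt p j with hpj | hjp
    · rw [Nat.choose_eq_zero_of_lt (by omega)]
      exact Nat.zero_le _
    obtain ⟨r, rfl⟩ := Nat.exists_eq_add_of_lt hjp
    have h₁ := Nat.choose_succ_right_eq (2 * (j + r + 1)) (2 * j)
    have h₂ := Nat.choose_succ_right_eq (2 * (j + r + 1)) (2 * j + 1)
    have h₃ := Nat.choose_succ_right_eq (j + r + 1) j
    rw [show 2 * (j + r + 1) - 2 * j = 2 * r + 2 by omega] at h₁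
    rw [show 2 * (j + r + 1) - (2 * j + 1) = 2 * r + 1 by omega] at h₂
    rw [show j + r + 1 - j = r + 1 by omega] at h₃
    rw [show 2 * (j + 1) = 2 * j + 1 + 1 by ring]
    refine Nat.le_of_mul_le_mul_right (c := (2 * j + 1) * (2 * j + 2)) ?_ (by positivity)
    calc (2 * (j + r + 1)).choose (2 * j + 1 + 1) * ((2 * j + 1) * (2 * j + 2))
        = (2 * (j + r + 1)).choose (2 * j) * (2 * r + 2) * (2 * r + 1) := by
          rw [show (2 * j + 1) * (2 * j + 2) = (2 * j + 1 + 1) * (2 * j + 1) by ring, ← mul_assoc,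
            h₂, mul_right_comm, h₁]
      _ ≤ (2 * (j + r + 1)) ^ j * (j + r + 1).choose j * (2 * r + 2) * (2 * r + 1) := by
          gcongr
      _ = (2 * (j + r + 1)) ^ j * ((j + r + 1).choose (j + 1) * (j + 1)) * 2 * (2 * r + 1) := by
          rw [h₃]; ring
      _ = (2 * (j + r + 1)) ^ j * (j + r + 1).choose (j + 1) * ((j + 1) * 2 * (2 * r + 1)) := by
          ring
      _ ≤ (2 * (j + r + 1)) ^ j * (j + r + 1).choose (j + 1)
            * (2 * (j + r + 1) * ((2 * j + 1) * (2 * j + 2))) := by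
          refine Nat.mul_le_mul_left _ ?_
          nlinarith [Nat.zero_le (j * r), Nat.zero_le (j * j), Nat.zero_le (j * j * r),
            Nat.zero_le (j * j * j)]
      _ = _ := by ring

theorem choose_two_mul_mul_pow_le {p : ℕ} {s : ℝ} (hs : 0 ≤ s) (hps : 2 * p * s ≤ 1) (j : ℕ) :
    ((2 * p).choose (2 * j) : ℝ) * s ^ j ≤ p.choose j :=
  calc ((2 * p).choose (2 * j) : ℝ) * s ^ j ≤ (2 * p) ^ j * p.choose j * s ^ j := by
        gcongr
        exact_mod_cast Nat.choose_two_mul_two_mul_le p j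
    _ = (2 * p * s) ^ j * p.choose j := by ring
    _ ≤ p.choose j := mul_le_of_le_one_left (by positivity) (pow_le_one₀ (by positivity) hps)

theorem Real.pow_rpow_div_natCast {t : ℝ} (ht : 0 ≤ t) {m : ℕ} (hm : m ≠ 0) (p : ℝ) :
    (t ^ m) ^ (p / m) = t ^ p := by
  rw [← Real.rpow_natCast, ← Real.rpow_mul ht, mul_div_cancel₀ _ (by exact_mod_cast hm)]

variable {κ : Type*} [Fintype κ]

theorem pow_expect_le_expect_pow_of_even [Nonempty κ] (f : κ → ℝ) {n : ℕ} (hn : Even n) :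
    (𝔼 x, f x) ^ n ≤ 𝔼 x, f x ^ n := by
  simp only [Fintype.expect_eq_sum_div_card, div_eq_inv_mul, mul_sum]
  exact Real.pow_arith_mean_le_arith_mean_pow_of_even univ (fun _ => (Fintype.card κ : ℝ)⁻¹) f
    (fun _ _ => by positivity) (by simp [Fintype.card_pos.ne']) hn

theorem expect_mul_le_rpow_mul_rpow {f g : κ → ℝ} (hf : ∀ x, 0 ≤ f x) (hg : ∀ x, 0 ≤ g x)
    {P Q : ℝ} (hPQ : P.HolderConjugate Q) :
    𝔼 x, f x * g x ≤ (𝔼 x, f x ^ P) ^ P⁻¹ * (𝔼 x, g x ^ Q) ^ Q⁻¹ := by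
  -- Hölder for sums, with the uniform weight `w` split as `w ^ P⁻¹ * w ^ Q⁻¹`
  set w : ℝ := (Fintype.card κ : ℝ)⁻¹
  have hw : 0 ≤ w := by positivity
  have hexpect : ∀ h : κ → ℝ, 𝔼 x, h x = ∑ x, w * h x := fun h => by
    rw [Fintype.expect_eq_sum_div_card, div_eq_inv_mul, mul_sum]
  have hpow : ∀ {R : ℝ} (h : κ → ℝ), 0 < R → (∀ x, 0 ≤ h x) →
      ∀ x, (w ^ R⁻¹ * h x) ^ R = w * h x ^ R := fun h hR hh x => by
    rw [Real.mul_rpow (by positivity) (hh x), ← Real.rpow_mul hw, inv_mul_cancel₀ hR.ne',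
      Real.rpow_one]
  have key := Real.inner_le_Lp_mul_Lq_of_nonneg univ hPQ
    (f := fun x => w ^ P⁻¹ * f x) (g := fun x => w ^ Q⁻¹ * g x)
    (fun x _ => by have := hf x; positivity) (fun x _ => by have := hg x; positivity)
  simp only [hpow f hPQ.pos hf, hpow g hPQ.symm.pos hg, ← hexpect, one_div] at key
  convert key using 1
  rw [hexpect]
  refine sum_congr rfl fun x _ => ?_
  rw [mul_mul_mul_comm, ← Real.rpow_add' hw (by rw [hPQ.inv_add_inv_eq_inv]; norm_num),
    hPQ.inv_add_inv_eq_inv, inv_one, Real.rpow_one]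

theorem expect_pow_mul_pow_le {u v : κ → ℝ} (hu : ∀ x, 0 ≤ u x) (hv : ∀ x, 0 ≤ v x) {A B : ℝ}
    (hA : 0 ≤ A) (hB : 0 ≤ B) {j p : ℕ} (hjp : j ≤ p) (huA : 𝔼 x, u x ^ p ≤ A ^ p)
    (hvB : 𝔼 x, v x ^ p ≤ B ^ p) :
    𝔼 x, u x ^ j * v x ^ (p - j) ≤ A ^ j * B ^ (p - j) := by
  rcases Nat.eq_zero_or_pos j with rfl | hj
  · simpa using hvB
  rcases hjp.eq_or_lt with rfl | hjp
  · simpa using huA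
  have hp0 : p ≠ 0 := by omega
  have hpj : p - j ≠ 0 := by omega
  have hp : (0 : ℝ) < p := by positivity
  have hPQ : Real.HolderConjugate (p / j) (p / (p - j : ℕ)) := by
    refine ⟨?_, by positivity, by positivity⟩
    rw [inv_div, inv_div, ← add_div, Nat.cast_sub hjp.le, add_sub_cancel, inv_one,
      div_self hp.ne']
  have h := expect_mul_le_rpow_mul_rpow (fun x => pow_nonneg (hu x) j)
    (fun x => pow_nonneg (hv x) (p - j)) hPQ
  simp only [Real.pow_rpow_div_natCast (hu _) hj.ne', Real.pow_rpow_div_natCast (hv _) hpj,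
    Real.rpow_natCast, inv_div] at h
  have hu' : 0 ≤ 𝔼 x, u x ^ p := expect_nonneg fun x _ => pow_nonneg (hu x) p
  have hv' : 0 ≤ 𝔼 x, v x ^ p := expect_nonneg fun x _ => pow_nonneg (hv x) p
  calc _ ≤ (𝔼 x, u x ^ p) ^ ((j : ℝ) / p) * (𝔼 x, v x ^ p) ^ (((p - j : ℕ) : ℝ) / p) := h
    _ ≤ (A ^ p) ^ ((j : ℝ) / p) * (B ^ p) ^ (((p - j : ℕ) : ℝ) / p) := by gcongr
    _ = A ^ j * B ^ (p - j) := by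
        rw [Real.pow_rpow_div_natCast hA hp0, Real.pow_rpow_div_natCast hB hp0, Real.rpow_natCast,
          Real.rpow_natCast]

theorem sum_smul_pow {R A : Type*} [CommSemiring R] [Semiring A] [Algebra R A]
    (c : κ → R) (U : κ → A) (m : ℕ) :
    (∑ a, c a • U a) ^ m = ∑ t : Fin m → κ, (∏ k, c (t k)) • (List.ofFn fun k => U (t k)).prod := by
  induction m with
  | zero => simp
  | succ m ih =>
    rw [pow_succ', ih, sum_mul_sum, ← Fintype.sum_prod_type']
    refine Fintype.sum_equiv (Fin.consEquiv fun _ => κ) _ _ fun ⟨a, t⟩ => ?_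
    simp [Fin.consEquiv, Fin.prod_univ_succ, List.ofFn_succ, smul_smul, mul_comm]

end Scalar

namespace Matrix

open scoped MatrixOrder

variable {d : Type*} [Fintype d]

theorem trace_expect {κ : Type*} (s : Finset κ) (f : κ → Matrix d d ℝ) :
    (𝔼 x ∈ s, f x).trace = 𝔼 x ∈ s, (f x).trace :=
  map_expect (traceLinearMap d ℚ≥0 ℝ) _ _

variable [DecidableEq d]

theorem PosSemidef.sqrt_eq_cfcSqrt {A : Matrix d d ℝ} (hA : A.PosSemidef) :
    hA.sqrt = CFC.sqrt A := by
  rw [CFC.sqrt_eq_real_sqrt A hA.nonneg, cfcₙ_eq_cfc (hf0 := Real.sqrt_zero), hA.1.cfc_eq,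
    IsHermitian.cfc, Unitary.conjStarAlgAut_apply]
  rfl

noncomputable def traceNorm (A : Matrix d d ℝ) : ℝ :=
  (posSemidef_self_mul_conjTranspose A).sqrt.trace

theorem traceNorm_nonneg (A : Matrix d d ℝ) : 0 ≤ A.traceNorm := by
  rw [traceNorm, PosSemidef.sqrt_eq_cfcSqrt]
  exact (nonneg_iff_posSemidef.mp (CFC.sqrt_nonneg _)).trace_nonneg

theorem IsHermitian.traceNorm_eq_trace_cfc_abs {A : Matrix d d ℝ} (hA : A.IsHermitian) :
    A.traceNorm = (cfc (fun x : ℝ => |x|) A).trace := by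
  have hAA : A * Aᴴ = star A * A := by rw [star_eq_conjTranspose, hA.eq]
  rw [traceNorm, PosSemidef.sqrt_eq_cfcSqrt, hAA]
  change (CFC.abs A).trace = _
  rw [CFC.abs_eq_cfc_norm A hA.isSelfAdjoint]
  rfl

theorem IsHermitian.exists_trace_mul_eq_traceNorm {A : Matrix d d ℝ} (hA : A.IsHermitian) :
    ∃ U ∈ unitaryGroup d ℝ, U.IsHermitian ∧ (U * A).trace = A.traceNorm := by
  set sign : ℝ → ℝ := fun x => if x < 0 then -1 else 1
  have hcont : ContinuousOn sign (spectrum ℝ A) := (finite_real_spectrum (A := A)).continuousOn _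
  have hU : (cfc sign A).IsHermitian := cfc_predicate sign A
  refine ⟨cfc sign A, ?_, hU, ?_⟩
  · have hsq : cfc sign A * cfc sign A = 1 := by
      rw [← cfc_mul sign sign A, ← cfc_one ℝ A]
      exact cfc_congr fun x _ => by simp only [sign]; split_ifs <;> norm_num
    rw [mem_unitaryGroup_iff, star_eq_conjTranspose, hU.eq, hsq]
  · rw [IsHermitian.traceNorm_eq_trace_cfc_abs hA]
    nth_rewrite 2 [← cfc_id' ℝ A]
    rw [← cfc_mul sign _ A]
    congr 1
    exact cfc_congr fun x _ => by
      simp only [sign]; split_ifs with h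
      · rw [abs_of_neg h]; ring
      · rw [abs_of_nonneg (not_lt.mp h)]; ring

theorem trace_le_card_of_mem_unitaryGroup {U : Matrix d d ℝ} (hU : U ∈ unitaryGroup d ℝ) :
    U.trace ≤ Fintype.card d := by
  rw [trace, ← nsmul_one, ← card_univ, ← sum_const]
  exact sum_le_sum fun i _ => (le_abs_self _).trans (entry_norm_bound_of_unitary hU i i)

theorem PosSemidef.trace_mul_nonneg {A B : Matrix d d ℝ} (hA : A.PosSemidef) (hB : B.PosSemidef) :
    0 ≤ (A * B).trace := by
  obtain ⟨X, rfl⟩ := CStarAlgebra.nonneg_iff_eq_star_mul_self.mp hA.nonneg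
  rw [star_eq_conjTranspose, mul_assoc, trace_mul_comm]
  exact (hB.mul_mul_conjTranspose_same X).trace_nonneg

theorem PosSemidef.le_trace_smul_one {A : Matrix d d ℝ} (hA : A.PosSemidef) : A ≤ A.trace • 1 := by
  rw [← Algebra.algebraMap_eq_smul_one]
  refine le_algebraMap_of_spectrum_le (fun x hx => ?_) hA.1.isSelfAdjoint
  obtain ⟨i, rfl⟩ := hA.1.spectrum_real_eq_range_eigenvalues ▸ hx
  rw [hA.1.trace_eq_sum_eigenvalues]
  exact single_le_sum (fun j _ => hA.eigenvalues_nonneg j) (mem_univ i)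

theorem PosSemidef.trace_mul_le_trace_mul_trace {A B : Matrix d d ℝ} (hA : A.PosSemidef)
    (hB : B.PosSemidef) : (A * B).trace ≤ A.trace * B.trace := by
  have h := hB.trace_mul_nonneg (le_iff.mp hA.le_trace_smul_one)
  rw [mul_sub, trace_sub, mul_smul_comm, mul_one, trace_smul, smul_eq_mul, trace_mul_comm] at h
  linarith

theorem IsHermitian.sq_trace_mul_le {M ρ : Matrix d d ℝ} (hM : M.IsHermitian) (hρ : ρ.PosSemidef)
    (hρ1 : ρ.trace = 1) : (M * ρ).trace ^ 2 ≤ (M ^ 2 * ρ).trace := by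
  set t := (M * ρ).trace
  -- the variance `Tr ((M - t) ^ 2 ρ)` is nonnegative
  have h := (posSemidef_conjTranspose_mul_self (M - t • 1)).trace_mul_nonneg hρ
  rw [conjTranspose_sub, hM.eq, conjTranspose_smul, conjTranspose_one, star_trivial] at h
  have hexp : (M - t • 1) * (M - t • 1) * ρ = M ^ 2 * ρ - (2 * t) • (M * ρ) + (t ^ 2) • ρ := by
    simp only [sub_mul, mul_sub, smul_mul_assoc, mul_smul_comm, one_mul, mul_one, smul_sub,
      smul_smul, sq]
    module
  rw [hexp, trace_add, trace_sub, trace_smul, trace_smul, smul_eq_mul, smul_eq_mul, hρ1] at h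
  nlinarith

theorem IsHermitian.trace_mul_pow_two_pow_le {M ρ : Matrix d d ℝ} (hM : M.IsHermitian)
    (hρ : ρ.PosSemidef) (hρ1 : ρ.trace = 1) (k : ℕ) :
    (M * ρ).trace ^ 2 ^ k ≤ (M ^ 2 ^ k * ρ).trace := by
  induction k generalizing M with
  | zero => simp
  | succ k ih =>
    calc (M * ρ).trace ^ 2 ^ (k + 1) = ((M * ρ).trace ^ 2) ^ 2 ^ k := by rw [← pow_mul, pow_succ']
      _ ≤ (M ^ 2 * ρ).trace ^ 2 ^ k := pow_le_pow_left₀ (sq_nonneg _) (hM.sq_trace_mul_le hρ hρ1) _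
      _ ≤ ((M ^ 2) ^ 2 ^ k * ρ).trace := ih (hM.pow 2)
      _ = (M ^ 2 ^ (k + 1) * ρ).trace := by rw [← pow_mul, pow_succ']

theorem IsHermitian.trace_mul_pow_le_trace_pow {M ρ : Matrix d d ℝ} (hM : M.IsHermitian)
    (hρ : ρ.PosSemidef) (hρ1 : ρ.trace = 1) (k : ℕ) :
    (M * ρ).trace ^ 2 ^ (k + 1) ≤ (M ^ 2 ^ (k + 1)).trace := by
  have hpsd : (M ^ 2 ^ (k + 1)).PosSemidef := by
    rw [pow_succ, pow_mul, sq]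
    nth_rewrite 1 [← (hM.pow _).eq]
    exact posSemidef_conjTranspose_mul_self _
  calc (M * ρ).trace ^ 2 ^ (k + 1) ≤ (M ^ 2 ^ (k + 1) * ρ).trace :=
        hM.trace_mul_pow_two_pow_le hρ hρ1 _
    _ ≤ (M ^ 2 ^ (k + 1)).trace := by simpa [hρ1] using hpsd.trace_mul_le_trace_mul_trace hρ

end Matrix

section BooleanCube

variable {ι : Type*}

def walsh (S : Finset ι) (x : ι → Bool) : ℝ := ∏ i ∈ S, if x i then -1 else 1

variable [DecidableEq ι]

theorem walsh_insert {S : Finset ι} {i : ι} (hi : i ∉ S) (x : ι → Bool) :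
    walsh (insert i S) x = (if x i then -1 else 1) * walsh S x :=
  prod_insert hi

theorem walsh_update_of_notMem {S : Finset ι} {i : ι} (hi : i ∉ S) (x : ι → Bool) (v : Bool) :
    walsh S (Function.update x i v) = walsh S x :=
  prod_congr rfl fun j hj => by rw [Function.update_of_ne (ne_of_mem_of_not_mem hj hi)]

theorem sum_powerset_walsh_update_of_notMem {t : Finset ι} {i : ι} (hi : i ∉ t)
    (c : Finset ι → ℝ) (x : ι → Bool) (v : Bool) :
    ∑ S ∈ t.powerset, c S * walsh S (Function.update x i v) = ∑ S ∈ t.powerset, c S * walsh S x :=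
  sum_congr rfl fun S hS => by
    rw [walsh_update_of_notMem fun hiS => hi (mem_powerset.mp hS hiS)]

variable [Fintype ι]

theorem expect_prod_walsh_nonneg {m : ℕ} (t : Fin m → Finset ι) :
    0 ≤ 𝔼 x, ∏ k, walsh (t k) x := by
  -- the mean factorises over the coordinates `i` into factors `(1 + (-1) ^ #{k | i ∈ t k}) / 2`
  have h : ∀ x : ι → Bool, ∏ k, walsh (t k) x
      = ∏ i, ∏ k, if i ∈ t k then (if x i then -1 else 1 : ℝ) else 1 := fun x => by
    rw [prod_comm]
    exact prod_congr rfl fun k _ => (Fintype.prod_ite_mem _ _).symm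
  simp_rw [Fintype.expect_eq_sum_div_card, h]
  rw [← Fintype.prod_sum fun i (b : Bool) => ∏ k, if i ∈ t k then (if b then -1 else 1 : ℝ) else 1]
  refine div_nonneg (prod_nonneg fun i _ => ?_) (Nat.cast_nonneg _)
  simp only [Fintype.sum_bool, if_true, Bool.false_eq_true, if_false, ite_self, prod_const_one]
  rw [prod_ite, prod_const, prod_const_one, mul_one]
  rcases neg_one_pow_eq_or ℝ #{k | i ∈ t k} with h | h <;> rw [h] <;> norm_num

theorem expect_update_not (F : (ι → Bool) → ℝ) (i : ι) :
    𝔼 x, F (Function.update x i (!x i)) = 𝔼 x, F x := by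
  have hinv : Function.Involutive fun x : ι → Bool => Function.update x i (!x i) := fun x => by
    simp
  exact Fintype.expect_equiv hinv.toPerm _ _ fun _ => rfl

theorem expect_pow_add_sign_mul {G H : (ι → Bool) → ℝ} {i : ι}
    (hG : ∀ x v, G (Function.update x i v) = G x) (hH : ∀ x v, H (Function.update x i v) = H x)
    (p : ℕ) :
    𝔼 x, (G x + (if x i then -1 else 1) * H x) ^ (2 * p)
      = ∑ j ∈ range (p + 1),
          ((2 * p).choose (2 * j) : ℝ) * 𝔼 x, H x ^ (2 * j) * G x ^ (2 * (p - j)) := by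
  -- averaging `x` with its flip at `i` cancels the odd powers of `H`
  set F : (ι → Bool) → ℝ := fun x => (G x + (if x i then -1 else 1) * H x) ^ (2 * p)
  have hpair : ∀ x, F x + F (Function.update x i (!x i))
      = (G x + H x) ^ (2 * p) + (G x - H x) ^ (2 * p) := by
    intro x
    simp only [F, hG, hH, Function.update_self]
    cases x i <;>
      simp only [Bool.not_true, Bool.not_false, if_true, Bool.false_eq_true, if_false] <;> ring
  calc 𝔼 x, F x = (𝔼 x, (F x + F (Function.update x i (!x i)))) / 2 := by
        rw [expect_add_distrib, expect_update_not F i]; ring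
    _ = _ := by
        simp_rw [hpair, add_pow_two_mul_add_sub_pow_two_mul, mul_assoc, ← mul_expect,
          expect_sum_comm, ← mul_expect]
        ring

theorem expect_pow_add_sign_mul_le {G H : (ι → Bool) → ℝ} {i : ι}
    (hG : ∀ x v, G (Function.update x i v) = G x) (hH : ∀ x v, H (Function.update x i v) = H x)
    {σ : ℝ} {p : ℕ} (hσ : 2 * p * σ ^ 2 ≤ 1) {a b : ℝ} (ha : 0 ≤ a) (hb : 0 ≤ b)
    (hGa : 𝔼 x, G x ^ (2 * p) ≤ a ^ p) (hHb : 𝔼 x, H x ^ (2 * p) ≤ b ^ p) :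
    𝔼 x, (G x + (if x i then -1 else 1) * (σ * H x)) ^ (2 * p) ≤ (a + b) ^ p := by
  rw [expect_pow_add_sign_mul (H := fun x => σ * H x) hG (fun x v => by rw [hH]) p, add_comm a,
    add_pow]
  refine sum_le_sum fun j hj => ?_
  have hj : j ≤ p := Nat.lt_succ_iff.mp (mem_range.mp hj)
  have hmoment : 𝔼 x, H x ^ (2 * j) * G x ^ (2 * (p - j)) ≤ b ^ j * a ^ (p - j) := by
    simp only [pow_mul] at hGa hHb ⊢
    exact expect_pow_mul_pow_le (fun x => sq_nonneg _) (fun x => sq_nonneg _) hb ha hj hHb hGa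
  calc ((2 * p).choose (2 * j) : ℝ) * 𝔼 x, (σ * H x) ^ (2 * j) * G x ^ (2 * (p - j))
      = ((2 * p).choose (2 * j) : ℝ) * (σ ^ 2) ^ j * 𝔼 x, H x ^ (2 * j) * G x ^ (2 * (p - j)) := by
        simp_rw [mul_pow σ, pow_mul σ, mul_assoc, ← mul_expect]
    _ ≤ p.choose j * (b ^ j * a ^ (p - j)) :=
        mul_le_mul (choose_two_mul_mul_pow_le (sq_nonneg σ) hσ j) hmoment
          (expect_nonneg fun x _ =>
            mul_nonneg ((even_two_mul j).pow_nonneg _) ((even_two_mul _).pow_nonneg _))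
          (by positivity)
    _ = b ^ j * a ^ (p - j) * p.choose j := by ring

theorem expect_pow_sum_powerset_noise_le {σ : ℝ} {p : ℕ} (hσ : 2 * p * σ ^ 2 ≤ 1)
    (s : Finset ι) (b : Finset ι → ℝ) :
    𝔼 x, (∑ S ∈ s.powerset, σ ^ #S * b S * walsh S x) ^ (2 * p)
      ≤ (∑ S ∈ s.powerset, b S ^ 2) ^ p := by
  induction s using Finset.induction_on generalizing b with
  | empty => simp [walsh, pow_mul]
  | insert i t hi ih =>
    have hsplit : ∀ x, ∑ S ∈ (insert i t).powerset, σ ^ #S * b S * walsh S x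
        = ∑ S ∈ t.powerset, σ ^ #S * b S * walsh S x
          + (if x i then -1 else 1) * (σ * ∑ S ∈ t.powerset, σ ^ #S * b (insert i S) * walsh S x) :=
      fun x => by
        rw [sum_powerset_insert hi, mul_sum, mul_sum]
        refine congrArg (_ + ·) (sum_congr rfl fun S hS => ?_)
        have hiS : i ∉ S := fun h => hi (mem_powerset.mp hS h)
        rw [card_insert_of_notMem hiS, walsh_insert hiS, pow_succ]
        ring
    simp_rw [hsplit, sum_powerset_insert hi fun S => b S ^ 2]
    exact expect_pow_add_sign_mul_le (sum_powerset_walsh_update_of_notMem hi _)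
      (sum_powerset_walsh_update_of_notMem hi _) hσ (sum_nonneg fun _ _ => sq_nonneg _)
      (sum_nonneg fun _ _ => sq_nonneg _) (ih b) (ih _)

theorem expect_pow_le_of_homogeneous {ℓ p : ℕ} (hp : 0 < p) {a : Finset ι → ℝ}
    (ha : ∀ S, #S ≠ ℓ → a S = 0) :
    𝔼 x, (∑ S, a S * walsh S x) ^ (2 * p) ≤ ((2 * p) ^ ℓ * ∑ S, a S ^ 2) ^ p := by
  set r : ℝ := √(2 * p)
  have hr : r ^ 2 = 2 * p := Real.sq_sqrt (by positivity)
  have hr0 : r ≠ 0 := by positivity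
  have hσ : 2 * p * r⁻¹ ^ 2 ≤ 1 := by rw [inv_pow, hr, mul_inv_cancel₀ (by positivity)]
  have h := expect_pow_sum_powerset_noise_le hσ univ fun S => r ^ ℓ * a S
  simp only [powerset_univ] at h
  convert h using 3 with x
  · refine sum_congr rfl fun S _ => ?_
    by_cases hS : #S = ℓ
    · rw [hS, ← mul_assoc, ← mul_pow, inv_mul_cancel₀ hr0, one_pow, one_mul]
    · simp [ha S hS]
  · rw [mul_sum, ← hr, ← pow_mul, mul_comm 2 ℓ, pow_mul]
    simp_rw [mul_pow]

end BooleanCube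

section Fourier

variable {ι d : Type*} [Fintype ι] [DecidableEq ι]

noncomputable def walshCoeff (ρ : (ι → Bool) → Matrix d d ℝ) (S : Finset ι) : Matrix d d ℝ :=
  𝔼 x, walsh S x • ρ x

theorem walshCoeff_eq_smul_sum (ρ : (ι → Bool) → Matrix d d ℝ) (S : Finset ι) :
    walshCoeff ρ S = ((2 : ℝ) ^ Fintype.card ι)⁻¹ • ∑ x, walsh S x • ρ x := by
  rw [walshCoeff, Finset.expect, ← NNRat.cast_smul_eq_nnqsmul ℝ]
  simp

theorem isHermitian_walshCoeff {ρ : (ι → Bool) → Matrix d d ℝ} (hρ : ∀ x, (ρ x).IsHermitian)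
    (S : Finset ι) : (walshCoeff ρ S).IsHermitian := by
  rw [walshCoeff_eq_smul_sum]
  exact (IsSelfAdjoint.all _).smul
    (isSelfAdjoint_sum _ fun x _ => (IsSelfAdjoint.all _).smul (hρ x).isSelfAdjoint)

variable [Fintype d] [DecidableEq d]

theorem sum_mul_trace_mul_walshCoeff (ρ : (ι → Bool) → Matrix d d ℝ) (a : Finset ι → ℝ)
    (U : Finset ι → Matrix d d ℝ) :
    ∑ S, a S * (U S * walshCoeff ρ S).trace
      = 𝔼 x, ((∑ S, (a S * walsh S x) • U S) * ρ x).trace := by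
  simp only [walshCoeff, mul_expect, mul_smul_comm, sum_mul, smul_mul_assoc, trace_sum,
    trace_smul, smul_eq_mul, trace_expect, ← expect_sum_comm, mul_assoc]

theorem expect_trace_sum_smul_pow_le {a : Finset ι → ℝ} (ha : ∀ S, 0 ≤ a S)
    {U : Finset ι → Matrix d d ℝ} (hU : ∀ S, U S ∈ unitaryGroup d ℝ) (m : ℕ) :
    𝔼 x, ((∑ S, (a S * walsh S x) • U S) ^ m).trace
      ≤ Fintype.card d * 𝔼 x, (∑ S, a S * walsh S x) ^ m := by
  simp only [sum_smul_pow, Fintype.sum_pow, trace_sum, trace_smul, smul_eq_mul, prod_mul_distrib,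
    expect_sum_comm, mul_sum]
  refine sum_le_sum fun t _ => ?_
  have htrace : (List.ofFn fun k => U (t k)).prod.trace ≤ Fintype.card d :=
    trace_le_card_of_mem_unitaryGroup <| list_prod_mem fun V hV => by
      obtain ⟨k, rfl⟩ := List.mem_ofFn.mp hV
      exact hU (t k)
  simp only [← expect_mul, ← mul_expect]
  rw [mul_comm (Fintype.card d : ℝ)]
  exact mul_le_mul_of_nonneg_left htrace
    (mul_nonneg (prod_nonneg fun k _ => ha _) (expect_prod_walsh_nonneg t))

theorem sum_sq_traceNorm_walshCoeff_pow_le {ρ : (ι → Bool) → Matrix d d ℝ}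
    (hρ : ∀ x, (ρ x).PosSemidef) (hρ1 : ∀ x, (ρ x).trace = 1) (ℓ k : ℕ) :
    (∑ S with #S = ℓ, (walshCoeff ρ S).traceNorm ^ 2) ^ 2 ^ k
      ≤ Fintype.card d * (2 ^ (k + 1)) ^ (ℓ * 2 ^ k) := by
  choose U hU hUh hUtr using fun S =>
    (isHermitian_walshCoeff (fun x => (hρ x).1) S).exists_trace_mul_eq_traceNorm
  set Q := ∑ S with #S = ℓ, (walshCoeff ρ S).traceNorm ^ 2
  set a : Finset ι → ℝ := fun S => if #S = ℓ then (walshCoeff ρ S).traceNorm else 0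
  set M : (ι → Bool) → Matrix d d ℝ := fun x => ∑ S, (a S * walsh S x) • U S
  set p := 2 ^ k
  have ha : ∀ S, 0 ≤ a S := fun S => by
    simp only [a]; split_ifs <;> simp [traceNorm_nonneg]
  have hQa : Q = ∑ S, a S ^ 2 := by
    simp only [Q, a, sum_filter, ite_pow, zero_pow two_ne_zero]
  have hQM : Q = 𝔼 x, (M x * ρ x).trace := by
    rw [← sum_mul_trace_mul_walshCoeff, hQa]
    refine sum_congr rfl fun S _ => ?_
    rw [hUtr, sq]
    simp only [a]; split_ifs <;> simp
  have hM : ∀ x, (M x).IsHermitian := fun x =>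
    isSelfAdjoint_sum _ fun S _ => (IsSelfAdjoint.all _).smul (hUh S).isSelfAdjoint
  have hQ : 0 ≤ Q := sum_nonneg fun _ _ => sq_nonneg _
  have hp : 0 < p := by positivity
  have key : Q ^ p * Q ^ p ≤ (Fintype.card d * (2 ^ (k + 1)) ^ (ℓ * p)) * Q ^ p :=
    calc Q ^ p * Q ^ p = Q ^ 2 ^ (k + 1) := by rw [← pow_add, ← two_mul, pow_succ']
      _ ≤ 𝔼 x, (M x * ρ x).trace ^ 2 ^ (k + 1) :=
          hQM ▸ pow_expect_le_expect_pow_of_even _ (by simp [pow_succ])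
      _ ≤ 𝔼 x, (M x ^ 2 ^ (k + 1)).trace :=
          expect_le_expect fun x _ => (hM x).trace_mul_pow_le_trace_pow (hρ x) (hρ1 x) k
      _ ≤ Fintype.card d * 𝔼 x, (∑ S, a S * walsh S x) ^ (2 * p) := by
          rw [pow_succ']; exact expect_trace_sum_smul_pow_le ha hU _
      _ ≤ Fintype.card d * ((2 * p) ^ ℓ * Q) ^ p := by
          gcongr
          rw [hQa]
          exact expect_pow_le_of_homogeneous hp fun S hS => if_neg hS
      _ = (Fintype.card d * (2 ^ (k + 1)) ^ (ℓ * p)) * Q ^ p := by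
          simp only [p, Nat.cast_pow, Nat.cast_ofNat]; ring
  rcases (pow_nonneg hQ p).eq_or_lt with hQp | hQp
  · rw [← hQp]; positivity
  · exact le_of_mul_le_mul_right key hQp

end Fourier

theorem le_of_forall_pow_two_pow_le {Q : ℝ} {c ℓ : ℕ} (hℓ : 1 ≤ ℓ)
    (h : ∀ k : ℕ, Q ^ 2 ^ k ≤ 2 ^ c * (2 ^ (k + 1)) ^ (ℓ * 2 ^ k)) :
    Q ≤ 2 ^ (3 * ℓ) * (((c : ℝ) / ℓ) ^ ℓ + 1) := by
  have hQk : ∀ k, c ≤ ℓ * 2 ^ k → Q ≤ (2 ^ (k + 2)) ^ ℓ := fun k hk => by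
    refine le_of_pow_le_pow_left₀ (n := 2 ^ k) (by positivity) (by positivity) ?_
    calc Q ^ 2 ^ k ≤ 2 ^ c * (2 ^ (k + 1)) ^ (ℓ * 2 ^ k) := h k
      _ ≤ 2 ^ (ℓ * 2 ^ k) * (2 ^ (k + 1)) ^ (ℓ * 2 ^ k) := by
          gcongr
          exact one_le_two
      _ = ((2 ^ (k + 2)) ^ ℓ) ^ 2 ^ k := by
          simp only [← pow_mul, ← pow_add]
          ring_nf
  have hℓ' : (0 : ℝ) < ℓ := by exact_mod_cast hℓ
  rcases le_or_gt c ℓ with hcℓ | hcℓ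
  · calc Q ≤ (2 ^ (0 + 2)) ^ ℓ := hQk 0 (by simpa using hcℓ)
      _ ≤ 2 ^ (3 * ℓ) * 1 := by
          rw [mul_one, ← pow_mul]
          exact pow_le_pow_right₀ one_le_two (by omega)
      _ ≤ _ := by
          gcongr
          exact le_add_of_nonneg_left (by positivity)
  · have hcℓ' : (1 : ℝ) ≤ c / ℓ := by
      rw [one_le_div hℓ']
      exact_mod_cast hcℓ.le
    obtain ⟨n, hn, hn'⟩ := exists_nat_pow_near hcℓ' one_lt_two
    have hk : c ≤ ℓ * 2 ^ (n + 1) := by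
      rw [div_lt_iff₀ hℓ'] at hn'
      exact_mod_cast (by linarith : (c : ℝ) ≤ ℓ * 2 ^ (n + 1))
    calc Q ≤ (2 ^ (n + 1 + 2)) ^ ℓ := hQk (n + 1) hk
      _ = 2 ^ (3 * ℓ) * ((2 : ℝ) ^ n) ^ ℓ := by
          simp only [← pow_mul, ← pow_add]
          ring_nf
      _ ≤ 2 ^ (3 * ℓ) * (((c : ℝ) / ℓ) ^ ℓ + 1) := by
          gcongr
          exact le_add_of_le_of_nonneg (pow_le_pow_left₀ (by positivity) hn ℓ) zero_le_one

/-- Matrix level-`ℓ` inequality (corollary form): for a density-matrix-valued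
function `ρ : {-1,1}ⁿ → 𝒮(ℝ^{2^c})`, for every `ℓ`,
`∑_{|S|=ℓ} (Tr |ρ̂(S)|)² ≤ 2^{Cℓ} ((c/ℓ)^ℓ + 1)` for an absolute constant `C`,
where `|A| = √(A Aᴴ)`. -/
theorem matrix_level_l_inequality :
    ∃ C : ℝ, ∀ (n c ℓ : ℕ), 1 ≤ ℓ →
      ∀ ρ : (Fin n → Bool) → Matrix (Fin (2 ^ c)) (Fin (2 ^ c)) ℝ,
      (∀ x, (ρ x).PosSemidef) → (∀ x, (ρ x).trace = 1) →
      ∑ S ∈ (Finset.univ : Finset (Finset (Fin n))).filter (fun S => S.card = ℓ),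
        ((Matrix.posSemidef_self_mul_conjTranspose
            (((2 : ℝ) ^ n)⁻¹ • ∑ x : Fin n → Bool, (∏ i ∈ S, (if x i then (-1 : ℝ) else 1)) • ρ x)).sqrt).trace ^ 2
        ≤ (2 : ℝ) ^ (C * ℓ) * (((c : ℝ) / ℓ) ^ ℓ + 1) := by
  refine ⟨3, fun n c ℓ hℓ ρ hρ hρ1 => ?_⟩
  have h := le_of_forall_pow_two_pow_le hℓ fun k => by
    have := sum_sq_traceNorm_walshCoeff_pow_le hρ hρ1 ℓ k
    rwa [Fintype.card_fin, Nat.cast_pow, Nat.cast_ofNat] at this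
  rw [show (3 : ℝ) * ℓ = ((3 * ℓ : ℕ) : ℝ) by push_cast; ring, Real.rpow_natCast]
  refine le_of_eq_of_le (sum_congr rfl fun S _ => ?_) h
  rw [walshCoeff_eq_smul_sum, Fintype.card_fin]
  rfl
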